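/- arXiv:1107.5952 — 2 statements merged into one kernel-verified Lean document; each statement's English description precedes it below -/
import Mathlib

section
/- Let h : S^m → S^n be a smooth map, and for tangent vectors u,v at x ∈ S^m define the curvature operator F_{uv} acting on vectors Y tangent to S^n at h(x) by F_{uv}Y = ⟨∂_v h, Y⟩∂_u h - ⟨∂_u h, Y⟩∂_v h. If there exist constants λ > 0 and μ ≥ 0 with |dh|² ≡ λ and Σ_v F_{uv}(∂_v h) = μ ∂_u h for every u (summing v over an orthonormal basis of T_x S^m), then the squared norm of the curvature satisfies |F|² ≡ 2λμ. -/
/-!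
The curvature `F_{uv}` is the skew operator `Y ↦ ⟪∂ᵥh, Y⟫ ∂ᵤh - ⟪∂ᵤh, Y⟫ ∂ᵥh`, whose squared
Hilbert–Schmidt norm is twice the Gram determinant `|∂ᵤh|²|∂ᵥh|² - ⟪∂ᵤh, ∂ᵥh⟫²`. Pairing the
eigenmap equation with `∂ᵤh` shows that these Gram determinants, summed over `v`, equal
`μ |∂ᵤh|²`; summing over `u` and using `|dh|² = λ` gives `|F|² = 2λμ`.
-/

open scoped RealInnerProductSpace

section Wedge

variable {V : Type*} [NormedAddCommGroup V] [InnerProductSpace ℝ V]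

def wedgeEnd (x y : V) (z : V) : V := ⟪y, z⟫ • x - ⟪x, z⟫ • y

theorem inner_wedgeEnd_apply_self (x y : V) :
    ⟪wedgeEnd x y y, x⟫ = ‖x‖ ^ 2 * ‖y‖ ^ 2 - ⟪x, y⟫ ^ 2 := by
  simp only [wedgeEnd, inner_sub_left, real_inner_smul_left, real_inner_self_eq_norm_sq,
    real_inner_comm x y]
  ring

theorem sum_norm_sq_wedgeEnd_apply {ι : Type*} [Fintype ι] (b : OrthonormalBasis ι ℝ V)
    (x y : V) :
    ∑ i, ‖wedgeEnd x y (b i)‖ ^ 2 = 2 * (‖x‖ ^ 2 * ‖y‖ ^ 2 - ⟪x, y⟫ ^ 2) := by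
  have hexpand : ∀ i, ‖wedgeEnd x y (b i)‖ ^ 2 =
      ‖x‖ ^ 2 * (⟪y, b i⟫ * ⟪b i, y⟫) - 2 * ⟪x, y⟫ * (⟪x, b i⟫ * ⟪b i, y⟫)
        + ‖y‖ ^ 2 * (⟪x, b i⟫ * ⟪b i, x⟫) := fun i => by
    rw [wedgeEnd, ← real_inner_self_eq_norm_sq]
    simp only [inner_sub_left, inner_sub_right, real_inner_smul_left, real_inner_smul_right,
      real_inner_self_eq_norm_sq, norm_smul, mul_pow, Real.norm_eq_abs, sq_abs,
      real_inner_comm x y, real_inner_comm (b i) x, real_inner_comm (b i) y]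
    ring
  simp only [hexpand, Finset.sum_add_distrib, Finset.sum_sub_distrib, ← Finset.mul_sum,
    b.sum_inner_mul_inner, real_inner_self_eq_norm_sq]
  ring

theorem sum_sum_gram_eq_of_sum_wedgeEnd_eq {ι : Type*} [Fintype ι] (p : ι → V) (μ : ℝ)
    (heig : ∀ u, ∑ v, wedgeEnd (p u) (p v) (p v) = μ • p u) :
    ∑ u, ∑ v, (‖p u‖ ^ 2 * ‖p v‖ ^ 2 - ⟪p u, p v⟫ ^ 2) = μ * ∑ u, ‖p u‖ ^ 2 := by
  rw [Finset.mul_sum]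
  refine Finset.sum_congr rfl fun u _ => ?_
  have hpaired := congrArg (⟪·, p u⟫) (heig u)
  simpa only [sum_inner, inner_wedgeEnd_apply_self, real_inner_smul_left,
    real_inner_self_eq_norm_sq] using hpaired

end Wedge

theorem stmt1_general {V : Type*} [NormedAddCommGroup V] [InnerProductSpace ℝ V]
    (m N : ℕ) (p : Fin m → V) (b : OrthonormalBasis (Fin N) ℝ V)
    (lam mu : ℝ)
    (F : Fin m → Fin m → V → V)
    (hF : ∀ u v Y, F u v Y = (inner ℝ (p v) Y : ℝ) • p u - (inner ℝ (p u) Y : ℝ) • p v)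
    (hdh : ∑ u, ‖p u‖ ^ 2 = lam)
    (heig : ∀ u, ∑ v, F u v (p v) = mu • p u) :
    ∑ u, ∑ v, ∑ U, ∑ W, (inner ℝ (F u v (b U)) (b W) : ℝ) ^ 2 = 2 * lam * mu := by
  have hFw : F = fun u v => wedgeEnd (p u) (p v) := funext fun u => funext fun v => funext (hF u v)
  subst hFw hdh
  simp only [b.sum_sq_inner_left, sum_norm_sq_wedgeEnd_apply, ← Finset.mul_sum,
    sum_sum_gram_eq_of_sum_wedgeEnd_eq p mu heig]
  ring

/-- Yang-Mills eigenmap identity: pointwise, if the differentials `p u = ∂ₑ h` satisfy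
`∑ u, ‖p u‖² = λ` and the eigenmap equation `∑ v, F u v (p v) = μ • p u`, where
`F u v Y = ⟪p v, Y⟫ • p u - ⟪p u, Y⟫ • p v`, then the squared curvature norm
`|F|² = ∑ u v U V, ⟪F u v (b U), b V⟫²` equals `2 λ μ`. -/
theorem stmt1 {V : Type*} [NormedAddCommGroup V] [InnerProductSpace ℝ V]
    (m N : ℕ) (p : Fin m → V) (b : OrthonormalBasis (Fin N) ℝ V)
    (lam mu : ℝ) (hlam : 0 < lam) (hmu : 0 ≤ mu)
    (F : Fin m → Fin m → V → V)
    (hF : ∀ u v Y, F u v Y = (inner ℝ (p v) Y : ℝ) • p u - (inner ℝ (p u) Y : ℝ) • p v)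
    (hdh : ∑ u, ‖p u‖ ^ 2 = lam)
    (heig : ∀ u, ∑ v, F u v (p v) = mu • p u) :
    ∑ u, ∑ v, ∑ U, ∑ W, (inner ℝ (F u v (b U)) (b W) : ℝ) ^ 2 = 2 * lam * mu :=
  stmt1_general m N p b lam mu F hF hdh heig
end

section
/- Let (α,β) be a C² solution on (0,π/2) of the system α'' + (m₂ cot - (m₁-2) tan)α' - (μ₁/cos²)(α³-α) - (λ₂/sin²)αβ² = 0 and β'' + ((m₂-2) cot - m₁ tan)β' - (μ₂/sin²)(β³-β) - (λ₁/cos²)α²β = 0 with 0 ≤ α ≤ 1, 0 ≤ β ≤ 1, λ₂ > 0. If α(t₀) = 1 at some t₀ ∈ (0,π/2), then (α,β) ≡ (1,0) on (0,π/2). -/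
/-!
Where `α = 1`, `α` has an interior maximum, so `α' = 0` and `α'' ≤ 0`, while the `α`-equation gives
`α'' = λ₂ β² / sin² t ≥ 0`. Hence `β = 0` there, and `β' = 0` since `β ≥ 0` is minimal. So the curve
`(t, α, α', β, β')` meets the stationary solution `(t, 1, 0, 0, 0)` of the autonomized first-order
system, and by uniqueness for its initial value problem coincides with it nearby. Thus
`{α = 1}` is open in `(0, π/2)`; it is closed by continuity, and nonempty, so it is everything.
-/

open Real Filter Topology

theorem IsLocalMax.deriv_deriv_nonpos {f : ℝ → ℝ} {x : ℝ} (h : IsLocalMax f x)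
    (hc : ContinuousAt f x) : deriv (deriv f) x ≤ 0 := by
  by_contra! hpos
  have hconst : f =ᶠ[𝓝 x] fun _ => f x := by
    filter_upwards [h, isLocalMin_of_deriv_deriv_pos hpos h.deriv_eq_zero hc] with y hmax hmin
    exact le_antisymm hmax hmin
  have : deriv (deriv f) x = 0 := by
    rw [hconst.deriv.deriv_eq]
    simp
  linarith

theorem ContDiffAt.eventuallyEq_of_hasDerivAt {E : Type*} [NormedAddCommGroup E]
    [NormedSpace ℝ E] {W : E → E} {f g : ℝ → E} {t₀ : ℝ} (hW : ContDiffAt ℝ 1 W (f t₀))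
    (hf : ∀ᶠ t in 𝓝 t₀, HasDerivAt f (W (f t)) t) (hg : ∀ᶠ t in 𝓝 t₀, HasDerivAt g (W (g t)) t)
    (heq : f t₀ = g t₀) : f =ᶠ[𝓝 t₀] g := by
  obtain ⟨K, s, hs, hlip⟩ := hW.exists_lipschitzOnWith
  have hfs : ∀ᶠ t in 𝓝 t₀, f t ∈ s := hf.self_of_nhds.continuousAt hs
  have hgs : ∀ᶠ t in 𝓝 t₀, g t ∈ s := hg.self_of_nhds.continuousAt (heq ▸ hs)
  exact ODE_solution_unique_of_eventually (v := fun _ => W) (s := fun _ => s)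
    (.of_forall fun _ => hlip) (hf.and hfs) (hg.and hgs) heq

theorem IsPreconnected.eq_const_of_eventually_eq {X Y : Type*} [TopologicalSpace X]
    [TopologicalSpace Y] [T1Space Y] {s : Set X} (hs : IsPreconnected s) {f : X → Y}
    (hf : ContinuousOn f s) {c : Y} (hloc : ∀ x ∈ s, f x = c → ∀ᶠ y in 𝓝[s] x, f y = c)
    {x₀ : X} (hx₀ : x₀ ∈ s) (h₀ : f x₀ = c) {x : X} (hx : x ∈ s) : f x = c := by
  refine (hs.induction₂ (fun x y => f x = c ↔ f y = c) (fun y hy => ?_)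
    (fun _ _ _ _ _ _ => Iff.trans) (fun _ _ _ _ => Iff.symm) hx₀ hx).1 h₀
  by_cases hyc : f y = c
  · filter_upwards [hloc y hy hyc] with z hz using iff_of_true hyc hz
  · filter_upwards [hf y hy (isOpen_ne.mem_nhds hyc)] with z hz using iff_of_false hyc hz

theorem ContDiffOn.differentiableAt_deriv {f : ℝ → ℝ} {s : Set ℝ} (hf : ContDiffOn ℝ 2 f s)
    (hs : IsOpen s) {t : ℝ} (ht : t ∈ s) : DifferentiableAt ℝ (deriv f) t :=
  ((hf.deriv_of_isOpen hs (by norm_num)).differentiableOn one_ne_zero).differentiableAt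
    (hs.mem_nhds ht)

section ReducedSystem

variable (M₁ M₂ lam₁ lam₂ mu₁ mu₂ : ℝ)

def ReducedSystemAt (α β : ℝ → ℝ) (t : ℝ) : Prop :=
  deriv (deriv α) t + (M₂ * (cos t / sin t) - (M₁ - 2) * tan t) * deriv α t
      - (mu₁ / cos t ^ 2) * (α t ^ 3 - α t) - (lam₂ / sin t ^ 2) * α t * β t ^ 2 = 0 ∧
    deriv (deriv β) t + ((M₂ - 2) * (cos t / sin t) - M₁ * tan t) * deriv β t
      - (mu₂ / sin t ^ 2) * (β t ^ 3 - β t) - (lam₁ / cos t ^ 2) * α t ^ 2 * β t = 0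

/-- The reduced system as a first-order system in `(t, α, α', β, β')`, with time as a coordinate so
that the field is autonomous. -/
noncomputable def reducedField (y : ℝ × ℝ × ℝ × ℝ × ℝ) : ℝ × ℝ × ℝ × ℝ × ℝ :=
  (1, y.2.2.1,
    -(M₂ * (cos y.1 / sin y.1) - (M₁ - 2) * tan y.1) * y.2.2.1
      + mu₁ / cos y.1 ^ 2 * (y.2.1 ^ 3 - y.2.1)
      + lam₂ / sin y.1 ^ 2 * y.2.1 * y.2.2.2.1 ^ 2,
    y.2.2.2.2,
    -((M₂ - 2) * (cos y.1 / sin y.1) - M₁ * tan y.1) * y.2.2.2.2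
      + mu₂ / sin y.1 ^ 2 * (y.2.2.2.1 ^ 3 - y.2.2.2.1)
      + lam₁ / cos y.1 ^ 2 * y.2.1 ^ 2 * y.2.2.2.1)

noncomputable def phaseCurve (α β : ℝ → ℝ) (t : ℝ) : ℝ × ℝ × ℝ × ℝ × ℝ :=
  (t, α t, deriv α t, β t, deriv β t)

theorem contDiffAt_reducedField {y : ℝ × ℝ × ℝ × ℝ × ℝ} (hsin : sin y.1 ≠ 0)
    (hcos : cos y.1 ≠ 0) : ContDiffAt ℝ 1 (reducedField M₁ M₂ lam₁ lam₂ mu₁ mu₂) y := by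
  have htan : ContDiffAt ℝ 1 (fun y : ℝ × ℝ × ℝ × ℝ × ℝ => tan y.1) y :=
    (contDiffAt_tan.2 hcos).comp y contDiffAt_fst
  unfold reducedField
  fun_prop (disch := simp [hsin, hcos])

theorem hasDerivAt_equilibrium (t : ℝ) :
    HasDerivAt (fun t : ℝ => (t, (1 : ℝ), (0 : ℝ), (0 : ℝ), (0 : ℝ)))
      (reducedField M₁ M₂ lam₁ lam₂ mu₁ mu₂ (t, 1, 0, 0, 0)) t := by
  have hfield : reducedField M₁ M₂ lam₁ lam₂ mu₁ mu₂ (t, 1, 0, 0, 0) = (1, 0, 0, 0, 0) := by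
    norm_num [reducedField]
  rw [hfield]
  exact (hasDerivAt_id t).prodMk <| (hasDerivAt_const t _).prodMk <| (hasDerivAt_const t _).prodMk
    <| (hasDerivAt_const t _).prodMk (hasDerivAt_const t _)

variable {M₁ M₂ lam₁ lam₂ mu₁ mu₂} {α β : ℝ → ℝ} {t₁ : ℝ}

theorem hasDerivAt_phaseCurve (hα : DifferentiableAt ℝ α t₁)
    (hα' : DifferentiableAt ℝ (deriv α) t₁) (hβ : DifferentiableAt ℝ β t₁)
    (hβ' : DifferentiableAt ℝ (deriv β) t₁)
    (hsys : ReducedSystemAt M₁ M₂ lam₁ lam₂ mu₁ mu₂ α β t₁) :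
    HasDerivAt (phaseCurve α β) (reducedField M₁ M₂ lam₁ lam₂ mu₁ mu₂ (phaseCurve α β t₁)) t₁ := by
  have hfield : reducedField M₁ M₂ lam₁ lam₂ mu₁ mu₂ (phaseCurve α β t₁) =
      (1, deriv α t₁, deriv (deriv α) t₁, deriv β t₁, deriv (deriv β) t₁) := by
    simp only [reducedField, phaseCurve, Prod.mk.injEq, true_and]
    exact ⟨by linear_combination -hsys.1, by linear_combination -hsys.2⟩
  rw [hfield]
  exact (hasDerivAt_id t₁).prodMk <| hα.hasDerivAt.prodMk <| hα'.hasDerivAt.prodMk <|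
    hβ.hasDerivAt.prodMk hβ'.hasDerivAt

theorem phaseCurve_eq_equilibrium (hlam : 0 < lam₂) (hsin : sin t₁ ≠ 0)
    (hα_le : ∀ᶠ t in 𝓝 t₁, α t ≤ 1) (hβ_nonneg : ∀ᶠ t in 𝓝 t₁, 0 ≤ β t)
    (hα : ContinuousAt α t₁) (hsys : ReducedSystemAt M₁ M₂ lam₁ lam₂ mu₁ mu₂ α β t₁)
    (h₁ : α t₁ = 1) : phaseCurve α β t₁ = (t₁, 1, 0, 0, 0) := by
  have hmax : IsLocalMax α t₁ := by simpa only [IsLocalMax, IsMaxFilter, h₁] using hα_le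
  have hα' : deriv α t₁ = 0 := hmax.deriv_eq_zero
  have hα'' := hmax.deriv_deriv_nonpos hα
  have hcoef : 0 < lam₂ / sin t₁ ^ 2 := by positivity
  have hβ : β t₁ = 0 := by
    have h := hsys.1
    rw [h₁, hα'] at h
    have hsq : lam₂ / sin t₁ ^ 2 * β t₁ ^ 2 = 0 := by nlinarith [sq_nonneg (β t₁)]
    simpa [hcoef.ne'] using hsq
  have hmin : IsLocalMin β t₁ := by simpa only [IsLocalMin, IsMinFilter, hβ] using hβ_nonneg
  simp only [phaseCurve, h₁, hα', hβ, hmin.deriv_eq_zero]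

theorem phaseCurve_eventuallyEq_equilibrium (hlam : 0 < lam₂) (hsin : sin t₁ ≠ 0)
    (hcos : cos t₁ ≠ 0) (hα_le : ∀ᶠ t in 𝓝 t₁, α t ≤ 1) (hβ_nonneg : ∀ᶠ t in 𝓝 t₁, 0 ≤ β t)
    (hsol : ∀ᶠ t in 𝓝 t₁, DifferentiableAt ℝ α t ∧ DifferentiableAt ℝ (deriv α) t ∧
      DifferentiableAt ℝ β t ∧ DifferentiableAt ℝ (deriv β) t ∧
      ReducedSystemAt M₁ M₂ lam₁ lam₂ mu₁ mu₂ α β t)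
    (h₁ : α t₁ = 1) : phaseCurve α β =ᶠ[𝓝 t₁] fun t => (t, 1, 0, 0, 0) := by
  obtain ⟨hα, -, -, -, hsys⟩ := hsol.self_of_nhds
  have h₀ := phaseCurve_eq_equilibrium hlam hsin hα_le hβ_nonneg hα.continuousAt hsys h₁
  refine ContDiffAt.eventuallyEq_of_hasDerivAt ?_
    (hsol.mono fun t ⟨hα, hα', hβ, hβ', hsys⟩ => hasDerivAt_phaseCurve hα hα' hβ hβ' hsys)
    (.of_forall (hasDerivAt_equilibrium M₁ M₂ lam₁ lam₂ mu₁ mu₂)) h₀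
  rw [h₀]
  exact contDiffAt_reducedField M₁ M₂ lam₁ lam₂ mu₁ mu₂ hsin hcos

end ReducedSystem

theorem stmt6_general (m₁ m₂ : ℕ)
    (lam₁ lam₂ mu₁ mu₂ : ℝ) (hl₂ : 0 < lam₂)
    (α β : ℝ → ℝ)
    (hreg : ContDiffOn ℝ 2 α (Set.Ioo 0 (π/2)) ∧ ContDiffOn ℝ 2 β (Set.Ioo 0 (π/2)))
    (hαrange : ∀ t ∈ Set.Ioo 0 (π/2), α t ∈ Set.Icc (0:ℝ) 1)
    (hβrange : ∀ t ∈ Set.Ioo 0 (π/2), β t ∈ Set.Icc (0:ℝ) 1)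
    (hode₁ : ∀ t ∈ Set.Ioo 0 (π/2),
      deriv (deriv α) t
        + ((m₂ : ℝ) * (Real.cos t / Real.sin t) - ((m₁ : ℝ) - 2) * Real.tan t) * deriv α t
        - (mu₁ / Real.cos t ^ 2) * (α t ^ 3 - α t)
        - (lam₂ / Real.sin t ^ 2) * α t * β t ^ 2 = 0)
    (hode₂ : ∀ t ∈ Set.Ioo 0 (π/2),
      deriv (deriv β) t
        + (((m₂ : ℝ) - 2) * (Real.cos t / Real.sin t) - (m₁ : ℝ) * Real.tan t) * deriv β t
        - (mu₂ / Real.sin t ^ 2) * (β t ^ 3 - β t)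
        - (lam₁ / Real.cos t ^ 2) * α t ^ 2 * β t = 0)
    (t₀ : ℝ) (ht₀ : t₀ ∈ Set.Ioo 0 (π/2)) (hα₀ : α t₀ = 1) :
    ∀ t ∈ Set.Ioo 0 (π/2), α t = 1 ∧ β t = 0 := by
  obtain ⟨hα, hβ⟩ := hreg
  have hI : IsOpen (Set.Ioo 0 (π / 2)) := isOpen_Ioo
  have hloc : ∀ t ∈ Set.Ioo 0 (π / 2), α t = 1 →
      phaseCurve α β =ᶠ[𝓝 t] fun t => (t, 1, 0, 0, 0) := by
    intro t ht h₁
    have hsin : 0 < sin t := sin_pos_of_pos_of_lt_pi ht.1 (by linarith [ht.2, pi_pos])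
    have hcos : 0 < cos t := cos_pos_of_mem_Ioo ⟨by linarith [ht.1, pi_pos], ht.2⟩
    refine phaseCurve_eventuallyEq_equilibrium (M₁ := m₁) (M₂ := m₂) (lam₁ := lam₁) (mu₁ := mu₁)
      (mu₂ := mu₂) hl₂ hsin.ne' hcos.ne' ?_ ?_ ?_ h₁ <;> filter_upwards [hI.mem_nhds ht] with s hs
    · exact (hαrange s hs).2
    · exact (hβrange s hs).1
    · exact ⟨(hα.differentiableOn two_ne_zero).differentiableAt (hI.mem_nhds hs),
        hα.differentiableAt_deriv hI hs,
        (hβ.differentiableOn two_ne_zero).differentiableAt (hI.mem_nhds hs),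
        hβ.differentiableAt_deriv hI hs, hode₁ s hs, hode₂ s hs⟩
  have hα₁ : ∀ t ∈ Set.Ioo 0 (π / 2), α t = 1 := fun t ht =>
    isPreconnected_Ioo.eq_const_of_eventually_eq hα.continuousOn
      (fun s hs h₁ => nhdsWithin_le_nhds ((hloc s hs h₁).fun_comp (·.2.1))) ht₀ hα₀ ht
  exact fun t ht => ⟨hα₁ t ht, congrArg (·.2.2.2.1) (hloc t ht (hα₁ t ht)).self_of_nhds⟩

/-- If a `C²` solution `(α, β)` of the reduced system on `(0, π/2)` with values in
`[0,1] × [0,1]` and `λ₂ > 0` satisfies `α t₀ = 1` at some interior point, then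
`(α, β) ≡ (1, 0)` on `(0, π/2)`. -/
theorem stmt6 (m₁ m₂ : ℕ) (hm₁ : 2 ≤ m₁) (hm₂ : 2 ≤ m₂)
    (lam₁ lam₂ mu₁ mu₂ : ℝ) (hl₂ : 0 < lam₂)
    (α β : ℝ → ℝ)
    (hreg : ContDiffOn ℝ 2 α (Set.Ioo 0 (π/2)) ∧ ContDiffOn ℝ 2 β (Set.Ioo 0 (π/2)))
    (hαrange : ∀ t ∈ Set.Ioo 0 (π/2), α t ∈ Set.Icc (0:ℝ) 1)
    (hβrange : ∀ t ∈ Set.Ioo 0 (π/2), β t ∈ Set.Icc (0:ℝ) 1)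
    (hode₁ : ∀ t ∈ Set.Ioo 0 (π/2),
      deriv (deriv α) t
        + ((m₂ : ℝ) * (Real.cos t / Real.sin t) - ((m₁ : ℝ) - 2) * Real.tan t) * deriv α t
        - (mu₁ / Real.cos t ^ 2) * (α t ^ 3 - α t)
        - (lam₂ / Real.sin t ^ 2) * α t * β t ^ 2 = 0)
    (hode₂ : ∀ t ∈ Set.Ioo 0 (π/2),
      deriv (deriv β) t
        + (((m₂ : ℝ) - 2) * (Real.cos t / Real.sin t) - (m₁ : ℝ) * Real.tan t) * deriv β t
        - (mu₂ / Real.sin t ^ 2) * (β t ^ 3 - β t)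
        - (lam₁ / Real.cos t ^ 2) * α t ^ 2 * β t = 0)
    (t₀ : ℝ) (ht₀ : t₀ ∈ Set.Ioo 0 (π/2)) (hα₀ : α t₀ = 1) :
    ∀ t ∈ Set.Ioo 0 (π/2), α t = 1 ∧ β t = 0 :=
  stmt6_general m₁ m₂ lam₁ lam₂ mu₁ mu₂ hl₂ α β hreg hαrange hβrange hode₁ hode₂ t₀ ht₀ hα₀
end
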